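/- arXiv:1606.05039 — 13 statements merged into one kernel-verified Lean document; each statement's English description precedes it below -/
import Mathlib

section
/- Let k ≥ 2 be an integer and set A = 6 if k = 2, A = 7 if k = 3, and A = 2k if k ≥ 4. Let f : N → C be an arithmetic function satisfying f(u² + k v²) = f(u)² + k·f(v)² for all positive integers u, v. If f(n) = 0 for every integer n with 1 ≤ n ≤ A, then f(n) = 0 for every positive integer n. -/
/-! The identity `(a + 2k + 1)² + k (a + k)² = (a + 1)² + k (a + k + 2)²`, fed into the functional
equation on both sides, writes `f (a + 2k + 1)²` in terms of `f` at `a + k`, `a + 1` and `a + k + 2`,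
all smaller than `a + 2k + 1` once `k ≥ 2`. So vanishing on `[1, 2k]` propagates to all positive integers
by strong induction, and `A ≥ 2k` in every case. -/

lemma add_two_mul_add_one_sq_add_mul_sq (k a : ℕ) :
    (a + 2 * k + 1) ^ 2 + k * (a + k) ^ 2 = (a + 1) ^ 2 + k * (a + k + 2) ^ 2 := by
  ring

section

variable {k : ℕ} {f : ℕ → ℂ}

lemma apply_eq_zero_of_forall_lt
    (hf : ∀ u v : ℕ, 0 < u → 0 < v → f (u ^ 2 + k * v ^ 2) = f u ^ 2 + (k : ℂ) * f v ^ 2)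
    (hk : 2 ≤ k) {n : ℕ} (hn : 2 * k < n) (hlt : ∀ m, 1 ≤ m → m < n → f m = 0) :
    f n = 0 := by
  obtain ⟨a, rfl⟩ : ∃ a, n = a + 2 * k + 1 := ⟨n - 2 * k - 1, by omega⟩
  have key := hf (a + 2 * k + 1) (a + k) (by omega) (by omega)
  rw [add_two_mul_add_one_sq_add_mul_sq, hf (a + 1) (a + k + 2) (by omega) (by omega),
    hlt (a + 1) (by omega) (by omega), hlt (a + k + 2) (by omega) (by omega),
    hlt (a + k) (by omega) (by omega)] at key
  simpa using key.symm

theorem eq_zero_of_forall_le_two_mul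
    (hf : ∀ u v : ℕ, 0 < u → 0 < v → f (u ^ 2 + k * v ^ 2) = f u ^ 2 + (k : ℂ) * f v ^ 2)
    (hk : 2 ≤ k) (h0 : ∀ n, 1 ≤ n → n ≤ 2 * k → f n = 0) :
    ∀ n, 1 ≤ n → f n = 0 := by
  intro n
  induction n using Nat.strong_induction_on with
  | _ n ih =>
    intro hn
    rcases le_or_gt n (2 * k) with hle | hgt
    · exact h0 n hn hle
    · exact apply_eq_zero_of_forall_lt hf hk hgt fun m hm hmn => ih m hmn hm

end

theorem arith_fun_char_zero (k : ℕ) (hk : 2 ≤ k)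
    (A : ℕ) (hA : A = if k = 2 then 6 else if k = 3 then 7 else 2 * k)
    (f : ℕ → ℂ)
    (hf : ∀ u v : ℕ, 0 < u → 0 < v →
      f (u ^ 2 + k * v ^ 2) = f u ^ 2 + (k : ℂ) * f v ^ 2)
    (h0 : ∀ n : ℕ, 1 ≤ n → n ≤ A → f n = 0) :
    ∀ n : ℕ, 1 ≤ n → f n = 0 := by
  have h2k : 2 * k ≤ A := by subst hA; split_ifs <;> omega
  exact eq_zero_of_forall_le_two_mul hf hk fun n hn hnk => h0 n hn (hnk.trans h2k)
end

section
/- Let k ≥ 2 be an integer and set A = 6 if k = 2, A = 7 if k = 3, and A = 2k if k ≥ 4. Let f : N → C be an arithmetic function satisfying f(u² + k v²) = f(u)² + k·f(v)² for all positive integers u, v. Suppose that for every integer n with 1 ≤ n ≤ A: f(n) = n whenever there exist positive integers u, v with n = u² + k v², and f(n) = n or f(n) = −n otherwise. Then for every positive integer n: f(n) = n whenever there exist positive integers u, v with n = u² + k v², and f(n) = n or f(n) = −n otherwise. -/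
/-!
Writing `n = a + 2k + 1`, the identity `n² + k(a + k)² = (a + 1)² + k(a + k + 2)²` together with
the functional equation expresses `f(n)²` through values of `f` at arguments smaller than `n` once
`k ≥ 2`. So `f(m)² = m²` propagates by strong induction from `m ≤ 2k` to every `m ≥ 1`; then `f`
agrees with the identity on every representable `n = u² + kv²`, since `f(n) = f(u)² + k f(v)²`.
-/

def PreservesForm (k : ℕ) (f : ℕ → ℂ) : Prop :=
  ∀ u v : ℕ, 0 < u → 0 < v → f (u ^ 2 + k * v ^ 2) = f u ^ 2 + (k : ℂ) * f v ^ 2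

namespace PreservesForm

variable {k : ℕ} {f : ℕ → ℂ}

theorem sq_apply_add_two_mul_add_one (hf : PreservesForm k f) (hk : 0 < k) (a : ℕ) :
    f (a + 2 * k + 1) ^ 2 = f (a + 1) ^ 2 + k * f (a + k + 2) ^ 2 - k * f (a + k) ^ 2 := by
  have hid : (a + 2 * k + 1) ^ 2 + k * (a + k) ^ 2 = (a + 1) ^ 2 + k * (a + k + 2) ^ 2 := by ring
  have h := hf (a + 2 * k + 1) (a + k) (by omega) (by omega)
  rw [hid, hf (a + 1) (a + k + 2) (by omega) (by omega)] at h
  linear_combination -h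

theorem sq_apply_eq_sq (hf : PreservesForm k f) (hk : 2 ≤ k)
    (hbase : ∀ n : ℕ, 1 ≤ n → n ≤ 2 * k → f n ^ 2 = (n : ℂ) ^ 2) :
    ∀ n : ℕ, 1 ≤ n → f n ^ 2 = (n : ℂ) ^ 2 := by
  intro n
  induction n using Nat.strong_induction_on with
  | _ n ih =>
  intro hn
  by_cases hnk : n ≤ 2 * k
  · exact hbase n hn hnk
  obtain ⟨a, rfl⟩ : ∃ a, n = a + 2 * k + 1 := ⟨n - (2 * k + 1), by omega⟩
  rw [hf.sq_apply_add_two_mul_add_one (by omega), ih (a + 1) (by omega) (by omega),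
    ih (a + k + 2) (by omega) (by omega), ih (a + k) (by omega) (by omega)]
  push_cast
  ring

theorem apply_sq_add_mul_sq (hf : PreservesForm k f) (hsq : ∀ n : ℕ, 1 ≤ n → f n ^ 2 = (n : ℂ) ^ 2)
    {u v : ℕ} (hu : 0 < u) (hv : 0 < v) : f (u ^ 2 + k * v ^ 2) = ((u ^ 2 + k * v ^ 2 : ℕ) : ℂ) := by
  rw [hf u v hu hv, hsq u hu, hsq v hv]
  push_cast
  ring

end PreservesForm

theorem arith_fun_char_id (k : ℕ) (hk : 2 ≤ k)
    (A : ℕ) (hA : A = if k = 2 then 6 else if k = 3 then 7 else 2 * k)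
    (f : ℕ → ℂ)
    (hf : ∀ u v : ℕ, 0 < u → 0 < v →
      f (u ^ 2 + k * v ^ 2) = f u ^ 2 + (k : ℂ) * f v ^ 2)
    (h0 : ∀ n : ℕ, 1 ≤ n → n ≤ A →
      ((∃ u v : ℕ, 0 < u ∧ 0 < v ∧ n = u ^ 2 + k * v ^ 2) → f n = (n : ℂ)) ∧
      (¬ (∃ u v : ℕ, 0 < u ∧ 0 < v ∧ n = u ^ 2 + k * v ^ 2) →
        f n = (n : ℂ) ∨ f n = -(n : ℂ))) :
    ∀ n : ℕ, 1 ≤ n →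
      ((∃ u v : ℕ, 0 < u ∧ 0 < v ∧ n = u ^ 2 + k * v ^ 2) → f n = (n : ℂ)) ∧
      (¬ (∃ u v : ℕ, 0 < u ∧ 0 < v ∧ n = u ^ 2 + k * v ^ 2) →
        f n = (n : ℂ) ∨ f n = -(n : ℂ)) := by
  have hf : PreservesForm k f := hf
  have hA2k : 2 * k ≤ A := by subst hA; split_ifs <;> omega
  have hbase : ∀ n : ℕ, 1 ≤ n → n ≤ 2 * k → f n ^ 2 = (n : ℂ) ^ 2 := by
    intro n hn hnk
    obtain ⟨hrep, hnrep⟩ := h0 n hn (hnk.trans hA2k)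
    by_cases h : ∃ u v : ℕ, 0 < u ∧ 0 < v ∧ n = u ^ 2 + k * v ^ 2
    · rw [hrep h]
    · exact sq_eq_sq_iff_eq_or_eq_neg.mpr (hnrep h)
  have hsq := hf.sq_apply_eq_sq hk hbase
  intro n hn
  refine ⟨?_, fun _ => sq_eq_sq_iff_eq_or_eq_neg.mp (hsq n hn)⟩
  rintro ⟨u, v, hu, hv, rfl⟩
  exact hf.apply_sq_add_mul_sq hsq hu hv
end

section
/- Let k ≥ 2 be an integer and set A = 6 if k = 2, A = 7 if k = 3, and A = 2k if k ≥ 4. Let f : N → C be an arithmetic function satisfying f(u² + k v²) = f(u)² + k·f(v)² for all positive integers u, v. Suppose that for every integer n with 1 ≤ n ≤ A: f(n) = 1/(k+1) whenever there exist positive integers u, v with n = u² + k v², and f(n) = 1/(k+1) or f(n) = −1/(k+1) otherwise. Then for every positive integer n: f(n) = 1/(k+1) whenever there exist positive integers u, v with n = u² + k v², and f(n) = 1/(k+1) or f(n) = −1/(k+1) otherwise. -/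
/-!
The identity `(m + 2k)² + k (m + k - 1)² = m² + k (m + k + 1)²` writes every `n > 2k` as
`u² + k v²` in two ways involving only smaller arguments, so the functional equation determines
`f(n)²` from values below `n`. Hence `f(n)² = c²` for all `n` once it holds for `n ≤ 2k`, where
`c = 1/(k+1)`. Then `f(u² + k v²) = (1 + k) c² = c`, and every other value is a square root of `c²`.
-/

section FunctionalEquation

variable {R : Type*} [CommRing R] {k : ℕ} {f : ℕ → R}

theorem sq_apply_add_two_mul (hk : 1 ≤ k)
    (hf : ∀ u v : ℕ, 0 < u → 0 < v → f (u ^ 2 + k * v ^ 2) = f u ^ 2 + (k : R) * f v ^ 2)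
    {m : ℕ} (hm : 0 < m) :
    f (m + 2 * k) ^ 2 + k * f (m + k - 1) ^ 2 = f m ^ 2 + k * f (m + k + 1) ^ 2 := by
  have hargs : (m + 2 * k) ^ 2 + k * (m + k - 1) ^ 2 = m ^ 2 + k * (m + k + 1) ^ 2 := by
    obtain ⟨j, rfl⟩ : ∃ j, k = j + 1 := ⟨k - 1, by omega⟩
    rw [show m + (j + 1) - 1 = m + j by omega]
    ring
  rw [← hf _ _ (by omega) (by omega), ← hf _ _ hm (by omega), hargs]

theorem sq_apply_eq_of_forall_le_two_mul (hk : 2 ≤ k)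
    (hf : ∀ u v : ℕ, 0 < u → 0 < v → f (u ^ 2 + k * v ^ 2) = f u ^ 2 + (k : R) * f v ^ 2)
    {c : R} (hbase : ∀ m : ℕ, 1 ≤ m → m ≤ 2 * k → f m ^ 2 = c ^ 2) :
    ∀ n : ℕ, 1 ≤ n → f n ^ 2 = c ^ 2 := by
  intro n hn
  induction n using Nat.strong_induction_on with
  | _ n ih =>
  rcases le_or_gt n (2 * k) with hnk | hnk
  · exact hbase n hn hnk
  obtain ⟨m, rfl⟩ : ∃ m, n = m + 2 * k := ⟨n - 2 * k, by omega⟩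
  have key := sq_apply_add_two_mul (by omega) hf (m := m) (by omega)
  rw [ih m (by omega) (by omega), ih (m + k - 1) (by omega) (by omega),
    ih (m + k + 1) (by omega) (by omega)] at key
  linear_combination key

end FunctionalEquation

theorem arith_fun_char_const (k : ℕ) (hk : 2 ≤ k)
    (A : ℕ) (hA : A = if k = 2 then 6 else if k = 3 then 7 else 2 * k)
    (f : ℕ → ℂ)
    (hf : ∀ u v : ℕ, 0 < u → 0 < v →
      f (u ^ 2 + k * v ^ 2) = f u ^ 2 + (k : ℂ) * f v ^ 2)
    (h0 : ∀ n : ℕ, 1 ≤ n → n ≤ A →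
      ((∃ u v : ℕ, 0 < u ∧ 0 < v ∧ n = u ^ 2 + k * v ^ 2) → f n = 1 / ((k : ℂ) + 1)) ∧
      (¬ (∃ u v : ℕ, 0 < u ∧ 0 < v ∧ n = u ^ 2 + k * v ^ 2) →
        f n = 1 / ((k : ℂ) + 1) ∨ f n = -(1 / ((k : ℂ) + 1)))) :
    ∀ n : ℕ, 1 ≤ n →
      ((∃ u v : ℕ, 0 < u ∧ 0 < v ∧ n = u ^ 2 + k * v ^ 2) → f n = 1 / ((k : ℂ) + 1)) ∧
      (¬ (∃ u v : ℕ, 0 < u ∧ 0 < v ∧ n = u ^ 2 + k * v ^ 2) →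
        f n = 1 / ((k : ℂ) + 1) ∨ f n = -(1 / ((k : ℂ) + 1))) := by
  set c : ℂ := 1 / ((k : ℂ) + 1) with hc
  have hbase : ∀ m : ℕ, 1 ≤ m → m ≤ 2 * k → f m ^ 2 = c ^ 2 := by
    intro m hm hmk
    obtain ⟨hrep, hnonrep⟩ := h0 m hm (by subst hA; split_ifs <;> omega)
    refine sq_eq_sq_iff_eq_or_eq_neg.mpr ?_
    by_cases h : ∃ u v : ℕ, 0 < u ∧ 0 < v ∧ m = u ^ 2 + k * v ^ 2
    exacts [Or.inl (hrep h), hnonrep h]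
  have hsq := sq_apply_eq_of_forall_le_two_mul hk hf hbase
  intro n hn
  refine ⟨?_, fun _ => sq_eq_sq_iff_eq_or_eq_neg.mp (hsq n hn)⟩
  rintro ⟨u, v, hu, hv, rfl⟩
  rw [hf u v hu hv, hsq u hu, hsq v hv, hc]
  field_simp
  ring
end

section
/- Let f : N → C satisfy f(u² + 2v²) = f(u)² + 2·f(v)² for all positive integers u, v. Then f(1) ∈ {0, 1, −1, 1/3, −1/3}. -/
/-!
Write `a = f 1`. The representations `3 = 1² + 2·1²`, `11 = 3² + 2·1²`, `19 = 1² + 2·3²` force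
`f 3`, `f 11`, `f 19` to be polynomials in `a`, and the double representations
`27 = 3² + 2·3² = 5² + 2·1²` and `51 = 7² + 2·1² = 1² + 2·5²` do the same for `f 5 ^ 2` and
`f 7 ^ 2`.
The double representations `123 = 11² + 2·1² = 5² + 2·7²` and `363 = 19² + 2·1² = 11² + 2·11²`
then give two polynomial equations in `a` alone, whose difference is
`12 a² (a² - 1) (9a² - 1) = 0`.
-/

def SatisfiesSqAddTwoSq {R : Type*} [CommRing R] (f : ℕ → R) : Prop :=
  ∀ u v : ℕ, 0 < u → 0 < v → f (u ^ 2 + 2 * v ^ 2) = f u ^ 2 + 2 * f v ^ 2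

namespace SatisfiesSqAddTwoSq

variable {R : Type*} [CommRing R] {f : ℕ → R}

theorem apply_eq (hf : SatisfiesSqAddTwoSq f) {n u v : ℕ} (hu : 0 < u) (hv : 0 < v)
    (hn : u ^ 2 + 2 * v ^ 2 = n) : f n = f u ^ 2 + 2 * f v ^ 2 :=
  hn ▸ hf u v hu hv

theorem apply_three (hf : SatisfiesSqAddTwoSq f) : f 3 = 3 * f 1 ^ 2 := by
  linear_combination hf.apply_eq (u := 1) (v := 1) one_pos one_pos rfl

theorem apply_eleven (hf : SatisfiesSqAddTwoSq f) : f 11 = 9 * f 1 ^ 4 + 2 * f 1 ^ 2 := by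
  linear_combination hf.apply_eq (u := 3) (v := 1) three_pos one_pos rfl +
    (f 3 + 3 * f 1 ^ 2) * hf.apply_three

theorem apply_nineteen (hf : SatisfiesSqAddTwoSq f) : f 19 = f 1 ^ 2 + 18 * f 1 ^ 4 := by
  linear_combination hf.apply_eq (u := 1) (v := 3) one_pos three_pos rfl +
    2 * (f 3 + 3 * f 1 ^ 2) * hf.apply_three

theorem apply_five_sq (hf : SatisfiesSqAddTwoSq f) : f 5 ^ 2 = 27 * f 1 ^ 4 - 2 * f 1 ^ 2 := by
  linear_combination hf.apply_eq (u := 3) (v := 3) three_pos three_pos (n := 27) rfl -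
    hf.apply_eq (u := 5) (v := 1) (by norm_num) one_pos (n := 27) rfl +
    (3 * f 3 + 9 * f 1 ^ 2) * hf.apply_three

theorem apply_seven_sq (hf : SatisfiesSqAddTwoSq f) :
    f 7 ^ 2 = 54 * f 1 ^ 4 - 5 * f 1 ^ 2 := by
  linear_combination hf.apply_eq (u := 1) (v := 5) one_pos (by norm_num) (n := 51) rfl -
    hf.apply_eq (u := 7) (v := 1) (by norm_num) one_pos (n := 51) rfl + 2 * hf.apply_five_sq

theorem relation_of_123 (hf : SatisfiesSqAddTwoSq f) :
    f 1 ^ 2 * (9 * f 1 ^ 4 - 10 * f 1 ^ 2 + 1) * (9 * f 1 ^ 2 + 14) = 0 := by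
  linear_combination hf.apply_eq (u := 5) (v := 7) (by norm_num) (by norm_num) (n := 123) rfl -
    hf.apply_eq (u := 11) (v := 1) (by norm_num) one_pos (n := 123) rfl -
    (f 11 + 9 * f 1 ^ 4 + 2 * f 1 ^ 2) * hf.apply_eleven + hf.apply_five_sq +
    2 * hf.apply_seven_sq

theorem relation_of_363 (hf : SatisfiesSqAddTwoSq f) :
    f 1 ^ 2 * (9 * f 1 ^ 4 - 10 * f 1 ^ 2 + 1) * (9 * f 1 ^ 2 + 2) = 0 := by
  linear_combination
    hf.apply_eq (u := 11) (v := 11) (by norm_num) (by norm_num) (n := 363) rfl -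
    hf.apply_eq (u := 19) (v := 1) (by norm_num) one_pos (n := 363) rfl -
    (f 19 + f 1 ^ 2 + 18 * f 1 ^ 4) * hf.apply_nineteen +
    3 * (f 11 + 9 * f 1 ^ 4 + 2 * f 1 ^ 2) * hf.apply_eleven

theorem twelve_mul_eq_zero (hf : SatisfiesSqAddTwoSq f) :
    12 * (f 1 ^ 2 * (f 1 ^ 2 - 1) * (9 * f 1 ^ 2 - 1)) = 0 := by
  linear_combination hf.relation_of_123 - hf.relation_of_363

end SatisfiesSqAddTwoSq

theorem eq_zero_or_eq_one_or_eq_neg_one_or_eq_third_or_eq_neg_third {K : Type*} [Field K]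
    {a : K} (h : a ^ 2 * (a ^ 2 - 1) * (9 * a ^ 2 - 1) = 0) :
    a = 0 ∨ a = 1 ∨ a = -1 ∨ a = 1 / 3 ∨ a = -(1 / 3) := by
  obtain (h | h) | h := mul_eq_zero.mp h |>.imp_left mul_eq_zero.mp
  · exact Or.inl (pow_eq_zero_iff two_ne_zero |>.mp h)
  · have : (a - 1) * (a + 1) = 0 := by linear_combination h
    rcases mul_eq_zero.mp this with h | h
    · exact Or.inr (Or.inl (by linear_combination h))
    · exact Or.inr (Or.inr (Or.inl (by linear_combination h)))
  · have : (3 * a - 1) * (3 * a + 1) = 0 := by linear_combination h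
    rcases mul_eq_zero.mp this with h | h
    · exact Or.inr (Or.inr (Or.inr (Or.inl
        (eq_one_div_of_mul_eq_one_left (by linear_combination h)))))
    · refine Or.inr (Or.inr (Or.inr (Or.inr (neg_eq_iff_eq_neg.mp ?_))))
      exact eq_one_div_of_mul_eq_one_left (by linear_combination -h)

theorem value_f1_k2 (f : ℕ → ℂ)
    (hf : ∀ u v : ℕ, 0 < u → 0 < v →
      f (u ^ 2 + 2 * v ^ 2) = f u ^ 2 + 2 * f v ^ 2) :
    f 1 = 0 ∨ f 1 = 1 ∨ f 1 = -1 ∨ f 1 = 1 / 3 ∨ f 1 = -(1 / 3) := by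
  have h := SatisfiesSqAddTwoSq.twelve_mul_eq_zero hf
  exact eq_zero_or_eq_one_or_eq_neg_one_or_eq_third_or_eq_neg_third
    ((mul_eq_zero.mp h).resolve_left (by norm_num))
end

section
/- Let f : N → C satisfy f(u² + 2v²) = f(u)² + 2·f(v)² for all positive integers u, v. Then one of the following holds: (1) f(n) = 0 for every integer n with 1 ≤ n ≤ 6; (2) f(n) = n for n ∈ {3, 6}, and f(n) = n or f(n) = −n for every other integer n with 1 ≤ n ≤ 6; (3) f(n) = 1/3 for n ∈ {3, 6}, and f(n) = 1/3 or f(n) = −1/3 for every other integer n with 1 ≤ n ≤ 6. -/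
/-!
Write `a = f 1`, `b = f 2`. The representations `3 = 1² + 2·1²`, `6 = 2² + 2·1²`, … express `f 3`, `f 6`,
`f 9`, `f 11` and the squares `f 4 ²`, `f 5 ²`, `f 7 ²` polynomially in `a` and `b`. Numbers with two
representations, `27 = 5² + 2·1² = 3² + 2·3²`, `33`, `54`, `99` and `123`, then give polynomial relations
between `a` and `b`; eliminating `b` forces `a² ∈ {0, 1, 1/9}`, and then `a²` determines `b²`, hence
`f n ²` for `n ≤ 6` and `f 3`, `f 6` themselves. So `f` agrees up to sign on `1, …, 6` with whichever of
the solutions `0`, `n ↦ n`, `n ↦ 1/3` has the same `a²`.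
-/

def PreservesSqAddTwoSq {R : Type*} [CommRing R] (f : ℕ → R) : Prop :=
  ∀ u v : ℕ, 0 < u → 0 < v → f (u ^ 2 + 2 * v ^ 2) = f u ^ 2 + 2 * f v ^ 2

namespace PreservesSqAddTwoSq

section CommRing

variable {R : Type*} [CommRing R] {f : ℕ → R}

theorem apply_three (hf : PreservesSqAddTwoSq f) : f 3 = 3 * f 1 ^ 2 := by
  linear_combination hf 1 1 one_pos one_pos

theorem apply_six (hf : PreservesSqAddTwoSq f) : f 6 = f 2 ^ 2 + 2 * f 1 ^ 2 :=
  hf 2 1 two_pos one_pos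

theorem apply_nine (hf : PreservesSqAddTwoSq f) : f 9 = f 1 ^ 2 + 2 * f 2 ^ 2 :=
  hf 1 2 one_pos two_pos

theorem apply_eleven (hf : PreservesSqAddTwoSq f) : f 11 = 9 * f 1 ^ 4 + 2 * f 1 ^ 2 := by
  linear_combination hf 3 1 (by norm_num) one_pos + (f 3 + 3 * f 1 ^ 2) * hf.apply_three

theorem sq_apply_five (hf : PreservesSqAddTwoSq f) : f 5 ^ 2 = 27 * f 1 ^ 4 - 2 * f 1 ^ 2 := by
  have h27 : f 5 ^ 2 + 2 * f 1 ^ 2 = f 3 ^ 2 + 2 * f 3 ^ 2 :=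
    (hf 5 1 (by norm_num) one_pos).symm.trans (hf 3 3 (by norm_num) (by norm_num))
  linear_combination h27 + 3 * (f 3 + 3 * f 1 ^ 2) * hf.apply_three

theorem sq_apply_seven (hf : PreservesSqAddTwoSq f) : f 7 ^ 2 = 54 * f 1 ^ 4 - 5 * f 1 ^ 2 := by
  have h99 : f 7 ^ 2 + 2 * f 5 ^ 2 = f 1 ^ 2 + 2 * f 7 ^ 2 :=
    (hf 7 5 (by norm_num) (by norm_num)).symm.trans (hf 1 7 one_pos (by norm_num))
  linear_combination 2 * hf.sq_apply_five - h99

theorem two_mul_sq_apply_four (hf : PreservesSqAddTwoSq f) :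
    2 * f 4 ^ 2 = 27 * f 1 ^ 4 - 3 * f 1 ^ 2 + 2 * f 2 ^ 2 := by
  have h33 : f 5 ^ 2 + 2 * f 2 ^ 2 = f 1 ^ 2 + 2 * f 4 ^ 2 :=
    (hf 5 2 (by norm_num) two_pos).symm.trans (hf 1 4 one_pos (by norm_num))
  linear_combination hf.sq_apply_five - h33

theorem quartic_relation (hf : PreservesSqAddTwoSq f) :
    f 2 ^ 4 + (4 * f 1 ^ 2 - 1) * f 2 ^ 2 - 32 * f 1 ^ 4 + 4 * f 1 ^ 2 = 0 := by
  have h54 : f 6 ^ 2 + 2 * f 3 ^ 2 = f 2 ^ 2 + 2 * f 5 ^ 2 :=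
    (hf 6 3 (by norm_num) (by norm_num)).symm.trans (hf 2 5 two_pos (by norm_num))
  linear_combination h54 - (f 6 + f 2 ^ 2 + 2 * f 1 ^ 2) * hf.apply_six
    - 2 * (f 3 + 3 * f 1 ^ 2) * hf.apply_three + 2 * hf.sq_apply_five

theorem mul_sq_apply_two (hf : PreservesSqAddTwoSq f) :
    (12 * f 1 ^ 2 - 4) * f 2 ^ 2 = 39 * f 1 ^ 4 - 7 * f 1 ^ 2 := by
  have h99 : f 9 ^ 2 + 2 * f 3 ^ 2 = f 1 ^ 2 + 2 * f 7 ^ 2 :=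
    (hf 9 3 (by norm_num) (by norm_num)).symm.trans (hf 1 7 one_pos (by norm_num))
  linear_combination 4 * hf.quartic_relation - h99 + (f 9 + f 1 ^ 2 + 2 * f 2 ^ 2) * hf.apply_nine
    + 2 * (f 3 + 3 * f 1 ^ 2) * hf.apply_three - 2 * hf.sq_apply_seven

theorem octic_relation (hf : PreservesSqAddTwoSq f) :
    f 1 ^ 2 * (f 1 ^ 2 - 1) * (9 * f 1 ^ 2 - 1) * (9 * f 1 ^ 2 + 14) = 0 := by
  have h123 : f 11 ^ 2 + 2 * f 1 ^ 2 = f 5 ^ 2 + 2 * f 7 ^ 2 :=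
    (hf 11 1 (by norm_num) one_pos).symm.trans (hf 5 7 (by norm_num) (by norm_num))
  linear_combination h123 - (f 11 + 9 * f 1 ^ 4 + 2 * f 1 ^ 2) * hf.apply_eleven
    + hf.sq_apply_five + 2 * hf.sq_apply_seven

theorem zero : PreservesSqAddTwoSq (0 : ℕ → R) := by
  intro u v _ _
  simp

theorem natCast : PreservesSqAddTwoSq (fun n : ℕ => (n : R)) := by
  intro u v _ _
  push_cast
  ring

end CommRing

section Field

variable {K : Type*} [Field K] {f g : ℕ → K}

theorem sq_apply_one_eq_zero_or_one_or_ninth [CharZero K] (hf : PreservesSqAddTwoSq f) :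
    f 1 ^ 2 = 0 ∨ f 1 ^ 2 = 1 ∨ f 1 ^ 2 = 1 / 9 := by
  -- eliminating `f 2 ²` between the relations from 54 and 99
  have h_elim : f 1 ^ 2 * (f 1 ^ 2 - 1) * (9 * f 1 ^ 2 - 1) * (15 * f 1 ^ 2 - 4) = 0 := by
    linear_combination (-1/9) * (12 * f 1 ^ 2 - 4) ^ 2 * hf.quartic_relation
      + (1/9) * ((12 * f 1 ^ 2 - 4) * f 2 ^ 2 + 39 * f 1 ^ 4 - 7 * f 1 ^ 2
        + (4 * f 1 ^ 2 - 1) * (12 * f 1 ^ 2 - 4)) * hf.mul_sq_apply_two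
  -- `15 (9x + 14) - 9 (15x - 4) = 246`
  have h : f 1 ^ 2 * (f 1 ^ 2 - 1) * (9 * f 1 ^ 2 - 1) = 0 := by
    linear_combination (15 * hf.octic_relation - 9 * h_elim) / 246
  rcases mul_eq_zero.mp h with h | h
  · rcases mul_eq_zero.mp h with h | h
    · exact Or.inl h
    · exact Or.inr (Or.inl (by linear_combination h))
  · exact Or.inr (Or.inr (by linear_combination h / 9))

theorem const_third [CharZero K] : PreservesSqAddTwoSq (fun _ : ℕ => (1 / 3 : K)) := by
  intro u v _ _
  ring

variable (hf : PreservesSqAddTwoSq f) (hg : PreservesSqAddTwoSq g)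
  (h1 : f 1 ^ 2 = g 1 ^ 2) (hg1 : 12 * g 1 ^ 2 ≠ 4)
include hf hg h1 hg1

theorem sq_apply_two_eq_of_sq_apply_one_eq : f 2 ^ 2 = g 2 ^ 2 := by
  refine mul_left_cancel₀ (sub_ne_zero.mpr hg1) ?_
  linear_combination hf.mul_sq_apply_two - hg.mul_sq_apply_two
    + (39 * (f 1 ^ 2 + g 1 ^ 2) - 7 - 12 * f 2 ^ 2) * h1

theorem apply_eq_of_sq_apply_one_eq [NeZero (2 : K)] (n : ℕ) (hn1 : 1 ≤ n) (hn6 : n ≤ 6) :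
    ((n = 3 ∨ n = 6) → f n = g n) ∧ (f n = g n ∨ f n = -g n) := by
  have h2 := sq_apply_two_eq_of_sq_apply_one_eq hf hg h1 hg1
  have h3 : f 3 = g 3 := by rw [hf.apply_three, hg.apply_three, h1]
  have h6 : f 6 = g 6 := by rw [hf.apply_six, hg.apply_six, h1, h2]
  refine ⟨by rintro (rfl | rfl) <;> assumption, sq_eq_sq_iff_eq_or_eq_neg.mp ?_⟩
  interval_cases n
  · exact h1
  · exact h2
  · rw [h3]
  · refine mul_left_cancel₀ (two_ne_zero (α := K)) ?_
    linear_combination hf.two_mul_sq_apply_four - hg.two_mul_sq_apply_four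
      + (27 * (f 1 ^ 2 + g 1 ^ 2) - 3) * h1 + 2 * h2
  · linear_combination hf.sq_apply_five - hg.sq_apply_five + (27 * (f 1 ^ 2 + g 1 ^ 2) - 2) * h1
  · rw [h6]

end Field

end PreservesSqAddTwoSq

theorem small_range_trichotomy_k2 (f : ℕ → ℂ)
    (hf : ∀ u v : ℕ, 0 < u → 0 < v →
      f (u ^ 2 + 2 * v ^ 2) = f u ^ 2 + 2 * f v ^ 2) :
    (∀ n : ℕ, 1 ≤ n → n ≤ 6 → f n = 0) ∨
    (∀ n : ℕ, 1 ≤ n → n ≤ 6 →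
      ((n = 3 ∨ n = 6) → f n = (n : ℂ)) ∧
      (¬ (n = 3 ∨ n = 6) → f n = (n : ℂ) ∨ f n = -(n : ℂ))) ∨
    (∀ n : ℕ, 1 ≤ n → n ≤ 6 →
      ((n = 3 ∨ n = 6) → f n = 1 / 3) ∧
      (¬ (n = 3 ∨ n = 6) → f n = 1 / 3 ∨ f n = -(1 / 3))) := by
  have hf : PreservesSqAddTwoSq f := hf
  rcases hf.sq_apply_one_eq_zero_or_one_or_ninth with h | h | h
  · refine Or.inl fun n hn1 hn6 => ?_
    simpa using (hf.apply_eq_of_sq_apply_one_eq .zero (by simpa using h) (by simp) n hn1 hn6).2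
  · refine Or.inr (Or.inl fun n hn1 hn6 => ?_)
    obtain ⟨h36, hpm⟩ :=
      hf.apply_eq_of_sq_apply_one_eq .natCast (by simpa using h) (by norm_num) n hn1 hn6
    exact ⟨h36, fun _ => hpm⟩
  · refine Or.inr (Or.inr fun n hn1 hn6 => ?_)
    obtain ⟨h36, hpm⟩ :=
      hf.apply_eq_of_sq_apply_one_eq .const_third (by rw [h]; norm_num) (by norm_num) n hn1 hn6
    exact ⟨h36, fun _ => hpm⟩
end

section
/- Let f : N → C satisfy f(u² + 3v²) = f(u)² + 3·f(v)² for all positive integers u, v, and write a = f(1), b = f(2). Then f(3)² = (8b² − 5a²)/3, f(4)² = 5b² − 4a², f(5)² = 8b² − 7a², f(6)² = (35b² − 32a²)/3, and f(7)² = 16b² − 15a². -/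
/-! Each of 28, 52, 76 and 112 has two representations `u² + 3v²` with `u, v > 0`:
`28 = 1² + 3·3² = 4² + 3·2² = 5² + 3·1²`, `52 = 2² + 3·4² = 5² + 3·3² = 7² + 3·1²`,
`76 = 7² + 3·3² = 8² + 3·2²`, `112 = 2² + 3·6² = 8² + 3·4²`.
Applying the functional equation to both representations gives linear relations between the
squares `f(n)²`, which determine `f(3)², f(4)², f(5)², f(7)², f(8)², f(6)²` in turn from `f(1)²` and
`f(2)²`. -/

def SatisfiesSquaresEquation {R : Type*} [Semiring R] (k : ℕ) (f : ℕ → R) : Prop :=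
  ∀ u v : ℕ, 0 < u → 0 < v → f (u ^ 2 + k * v ^ 2) = f u ^ 2 + k * f v ^ 2

theorem SatisfiesSquaresEquation.eq_of_eq {R : Type*} [Semiring R] {k : ℕ} {f : ℕ → R}
    (hf : SatisfiesSquaresEquation k f) (u v x y : ℕ) (hu : 0 < u := by norm_num)
    (hv : 0 < v := by norm_num) (hx : 0 < x := by norm_num) (hy : 0 < y := by norm_num)
    (h : u ^ 2 + k * v ^ 2 = x ^ 2 + k * y ^ 2 := by norm_num) :
    f u ^ 2 + k * f v ^ 2 = f x ^ 2 + k * f y ^ 2 := by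
  rw [← hf u v hu hv, ← hf x y hx hy, h]

theorem squares_formulae_k3 (f : ℕ → ℂ)
    (hf : ∀ u v : ℕ, 0 < u → 0 < v →
      f (u ^ 2 + 3 * v ^ 2) = f u ^ 2 + 3 * f v ^ 2)
    (a b : ℂ) (ha : a = f 1) (hb : b = f 2) :
    f 3 ^ 2 = (8 * b ^ 2 - 5 * a ^ 2) / 3 ∧
    f 4 ^ 2 = 5 * b ^ 2 - 4 * a ^ 2 ∧
    f 5 ^ 2 = 8 * b ^ 2 - 7 * a ^ 2 ∧
    f 6 ^ 2 = (35 * b ^ 2 - 32 * a ^ 2) / 3 ∧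
    f 7 ^ 2 = 16 * b ^ 2 - 15 * a ^ 2 := by
  subst ha hb
  have hf3 : SatisfiesSquaresEquation 3 f := fun u v hu hv => mod_cast hf u v hu hv
  have h28 := hf3.eq_of_eq 1 3 5 1
  have h28' := hf3.eq_of_eq 4 2 5 1
  have h52 := hf3.eq_of_eq 5 3 2 4
  have h52' := hf3.eq_of_eq 7 1 5 3
  have h76 := hf3.eq_of_eq 8 2 7 3
  have h112 := hf3.eq_of_eq 2 6 8 4
  push_cast at h28 h28' h52 h52' h76 h112
  have h5 : f 5 ^ 2 = 3 * f 3 ^ 2 - 2 * f 1 ^ 2 := by linear_combination -h28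
  have h4 : f 4 ^ 2 = f 1 ^ 2 + 3 * f 3 ^ 2 - 3 * f 2 ^ 2 := by linear_combination h28' - h28
  have h3 : f 3 ^ 2 = (8 * f 2 ^ 2 - 5 * f 1 ^ 2) / 3 := by
    linear_combination (h5 - h52 - 3 * h4) / 3
  have h7 : f 7 ^ 2 = 16 * f 2 ^ 2 - 15 * f 1 ^ 2 := by linear_combination h52' + h5 + 6 * h3
  have h8 : f 8 ^ 2 = 21 * f 2 ^ 2 - 20 * f 1 ^ 2 := by linear_combination h76 + h7 + 3 * h3
  refine ⟨h3, by linear_combination h4 + 3 * h3, by linear_combination h5 + 3 * h3, ?_, h7⟩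
  linear_combination (h112 + h8 + 3 * h4 + 9 * h3) / 3
end

section
/- Let f : N → C satisfy f(u² + 3v²) = f(u)² + 3·f(v)² for all positive integers u, v. Then f(1) ∈ {0, 1, −1, 1/4, −1/4}. -/
/-!
The numbers 28, 52 and 196 have several representations `u² + 3 v²` with `u, v > 0`:
`28 = 4² + 3·2² = 1² + 3·3² = 5² + 3·1²`, `52 = 7² + 3·1² = 5² + 3·3² = 2² + 3·4²` and
`196 = 7² + 3·7² = 13² + 3·3²`. Comparing the functional equation on them, with `f 4`, `f 7`,
`f 13` expressed through `a = f 1` and `b = f 2`, gives `5 b² = 4 a² (4 a² + 1)` and then two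
relations in `a` alone, `a² (16 a² + 55) (a² - 1) (16 a² - 1) = 0` (from 52) and
`a² (16 a² + 7) (a² - 1) (16 a² - 1) = 0` (from 196). Their difference is
`48 a² (a² - 1) (16 a² - 1) = 0`.
-/

def SatisfiesFE {K : Type*} [Semiring K] (k : ℕ) (f : ℕ → K) : Prop :=
  ∀ u v : ℕ, 0 < u → 0 < v → f (u ^ 2 + k * v ^ 2) = f u ^ 2 + k * f v ^ 2

namespace SatisfiesFE

theorem sq_add_eq_of_eq {R : Type*} [Semiring R] {k : ℕ} {f : ℕ → R} (hf : SatisfiesFE k f)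
    {u v u' v' : ℕ} (h : u ^ 2 + k * v ^ 2 = u' ^ 2 + k * v' ^ 2 := by norm_num)
    (hu : 0 < u := by norm_num) (hv : 0 < v := by norm_num)
    (hu' : 0 < u' := by norm_num) (hv' : 0 < v' := by norm_num) :
    f u ^ 2 + k * f v ^ 2 = f u' ^ 2 + k * f v' ^ 2 := by
  rw [← hf u v hu hv, h, hf u' v' hu' hv']

section CommRing

variable {R : Type*} [CommRing R] {f : ℕ → R} (hf : SatisfiesFE 3 f)
include hf

theorem apply_four : f 4 = 4 * f 1 ^ 2 := by
  linear_combination (hf 1 1 one_pos one_pos : f 4 = _)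

theorem apply_seven : f 7 = f 2 ^ 2 + 3 * f 1 ^ 2 := by
  linear_combination (hf 2 1 two_pos one_pos : f 7 = _)

theorem apply_thirteen : f 13 = f 1 ^ 2 + 3 * f 2 ^ 2 := by
  linear_combination (hf 1 2 one_pos two_pos : f 13 = _)

theorem three_mul_sq_apply_three : 3 * f 3 ^ 2 = 16 * f 1 ^ 4 + 3 * f 2 ^ 2 - f 1 ^ 2 := by
  linear_combination -hf.sq_add_eq_of_eq (u := 4) (v := 2) (u' := 1) (v' := 3)
    + (f 4 + 4 * f 1 ^ 2) * hf.apply_four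

theorem sq_apply_five : f 5 ^ 2 = 16 * f 1 ^ 4 + 3 * f 2 ^ 2 - 3 * f 1 ^ 2 := by
  linear_combination hf.sq_add_eq_of_eq (u := 5) (v := 1) (u' := 1) (v' := 3)
    + hf.three_mul_sq_apply_three

theorem five_mul_sq_apply_two : 5 * f 2 ^ 2 = 4 * f 1 ^ 2 * (4 * f 1 ^ 2 + 1) := by
  linear_combination hf.sq_add_eq_of_eq (u := 5) (v := 3) (u' := 2) (v' := 4)
    - hf.sq_apply_five - hf.three_mul_sq_apply_three + 3 * (f 4 + 4 * f 1 ^ 2) * hf.apply_four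

theorem apply_one_root_of_fiftytwo :
    f 1 ^ 2 * (16 * f 1 ^ 2 + 55) * (f 1 ^ 2 - 1) * (16 * f 1 ^ 2 - 1) = 0 := by
  have h52 : (f 2 ^ 2 + 3 * f 1 ^ 2) ^ 2 + 3 * f 1 ^ 2 = f 2 ^ 2 + 48 * f 1 ^ 4 := by
    linear_combination hf.sq_add_eq_of_eq (u := 7) (v := 1) (u' := 2) (v' := 4)
      - (f 7 + f 2 ^ 2 + 3 * f 1 ^ 2) * hf.apply_seven + 3 * (f 4 + 4 * f 1 ^ 2) * hf.apply_four
  linear_combination 25 * h52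
    - (5 * f 2 ^ 2 + 16 * f 1 ^ 4 + 34 * f 1 ^ 2 - 5) * hf.five_mul_sq_apply_two

theorem apply_one_root_of_one_ninety_six :
    f 1 ^ 2 * (16 * f 1 ^ 2 + 7) * (f 1 ^ 2 - 1) * (16 * f 1 ^ 2 - 1) = 0 := by
  have h196 : 4 * (f 2 ^ 2 + 3 * f 1 ^ 2) ^ 2
      = (f 1 ^ 2 + 3 * f 2 ^ 2) ^ 2 + 16 * f 1 ^ 4 + 3 * f 2 ^ 2 - f 1 ^ 2 := by
    linear_combination hf.sq_add_eq_of_eq (u := 7) (v := 7) (u' := 13) (v' := 3)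
      - 4 * (f 7 + f 2 ^ 2 + 3 * f 1 ^ 2) * hf.apply_seven
      + (f 13 + f 1 ^ 2 + 3 * f 2 ^ 2) * hf.apply_thirteen + hf.three_mul_sq_apply_three
  linear_combination -5 * h196
    + (-5 * f 2 ^ 2 - 16 * f 1 ^ 4 + 14 * f 1 ^ 2 - 3) * hf.five_mul_sq_apply_two

end CommRing

theorem sq_apply_one_mul_sub_one_mul_eq_zero {K : Type*} [Field K] [CharZero K] {f : ℕ → K}
    (hf : SatisfiesFE 3 f) :
    f 1 ^ 2 * (f 1 ^ 2 - 1) * (16 * f 1 ^ 2 - 1) = 0 := by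
  linear_combination (hf.apply_one_root_of_fiftytwo - hf.apply_one_root_of_one_ninety_six) / 48

end SatisfiesFE

theorem eq_of_sq_mul_sq_sub_one_mul_eq_zero {K : Type*} [Field K] [CharZero K] {a : K}
    (h : a ^ 2 * (a ^ 2 - 1) * (16 * a ^ 2 - 1) = 0) :
    a = 0 ∨ a = 1 ∨ a = -1 ∨ a = 1 / 4 ∨ a = -(1 / 4) := by
  simp only [mul_eq_zero, sub_eq_zero] at h
  rcases h with (h | h) | h
  · exact Or.inl (pow_eq_zero_iff two_ne_zero |>.mp h)
  · rcases sq_eq_one_iff.mp h with h | h <;> simp [h]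
  · have : a ^ 2 = (1 / 4) ^ 2 := by linear_combination h / 16
    rcases sq_eq_sq_iff_eq_or_eq_neg.mp this with h | h <;> norm_num [h]

theorem value_f1_k3 (f : ℕ → ℂ)
    (hf : ∀ u v : ℕ, 0 < u → 0 < v →
      f (u ^ 2 + 3 * v ^ 2) = f u ^ 2 + 3 * f v ^ 2) :
    f 1 = 0 ∨ f 1 = 1 ∨ f 1 = -1 ∨ f 1 = 1 / 4 ∨ f 1 = -(1 / 4) := by
  have hf' : SatisfiesFE 3 f := fun u v hu hv => by exact_mod_cast hf u v hu hv
  exact eq_of_sq_mul_sq_sub_one_mul_eq_zero hf'.sq_apply_one_mul_sub_one_mul_eq_zero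
end

section
/- Let f : N → C satisfy f(u² + 3v²) = f(u)² + 3·f(v)² for all positive integers u, v. Then one of the following holds: (1) f(n) = 0 for every integer n with 1 ≤ n ≤ 7; (2) f(n) = n for n ∈ {4, 7}, and f(n) = n or f(n) = −n for every other integer n with 1 ≤ n ≤ 7; (3) f(n) = 1/4 for n ∈ {4, 7}, and f(n) = 1/4 or f(n) = −1/4 for every other integer n with 1 ≤ n ≤ 7. -/
/-!
Several integers have more than one representation `u² + 3v²` (`28 = 5² + 3 = 4² + 3·2² = 1² + 3·3²`,
`52 = 7² + 3 = 2² + 3·4² = 5² + 3·3²`, `76 = 8² + 3·2² = 7² + 3·3²`, `84 = 6² + 3·4² = 3² + 3·5²`,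
`172 = 13² + 3 = 8² + 3·6²`), and each gives a polynomial relation among the values of `f`.
Eliminating, every `f(n)²` with `n ≤ 7`, as well as `f(4)` and `f(7)`, is a polynomial in
`a = f(1)²`, and `a(a - 1)(16a - 1) = 0`. The three solutions `0`, `n ↦ n` and `n ↦ 1/4`
realise `a = 0, 1, 1/16`, so `f` agrees with one of them up to the sign of `f(n)`.
-/

def SatisfiesQuadFE (k : ℕ) (f : ℕ → ℂ) : Prop :=
  ∀ u v : ℕ, 0 < u → 0 < v → f (u ^ 2 + k * v ^ 2) = f u ^ 2 + k * f v ^ 2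

theorem satisfiesQuadFE_const {k : ℕ} {c : ℂ} (hc : (1 + k) * c ^ 2 = c) :
    SatisfiesQuadFE k fun _ => c :=
  fun _ _ _ _ => by linear_combination -hc

theorem satisfiesQuadFE_natCast (k : ℕ) : SatisfiesQuadFE k fun n => (n : ℂ) :=
  fun _ _ _ _ => by push_cast; ring

namespace SatisfiesQuadFE

variable {f g : ℕ → ℂ}

theorem map_four (hf : SatisfiesQuadFE 3 f) : f 4 = 4 * f 1 ^ 2 := by
  have h := hf 1 1 one_pos one_pos
  norm_num at h
  linear_combination h

theorem map_seven (hf : SatisfiesQuadFE 3 f) : f 7 = f 2 ^ 2 + 3 * f 1 ^ 2 := by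
  have h := hf 2 1 two_pos one_pos
  norm_num at h
  exact h

theorem sq_map_three (hf : SatisfiesQuadFE 3 f) :
    f 3 ^ 2 = (16 * (f 1 ^ 2) ^ 2 + 3 * f 2 ^ 2 - f 1 ^ 2) / 3 := by
  have h₁ := hf 4 2 (by norm_num) two_pos
  have h₂ := hf 1 3 one_pos (by norm_num)
  norm_num [hf.map_four] at h₁ h₂
  linear_combination (h₁ - h₂) / 3

theorem sq_map_five (hf : SatisfiesQuadFE 3 f) : f 5 ^ 2 = 3 * f 3 ^ 2 - 2 * f 1 ^ 2 := by
  have h₁ := hf 5 1 (by norm_num) one_pos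
  have h₂ := hf 1 3 one_pos (by norm_num)
  norm_num at h₁ h₂
  linear_combination h₂ - h₁

theorem sq_map_two (hf : SatisfiesQuadFE 3 f) :
    f 2 ^ 2 = (16 * (f 1 ^ 2) ^ 2 + 4 * f 1 ^ 2) / 5 := by
  have h₁ := hf 2 4 two_pos (by norm_num)
  have h₂ := hf 5 3 (by norm_num) (by norm_num)
  norm_num [hf.map_four] at h₁ h₂
  linear_combination (h₁ - h₂ - hf.sq_map_five - 6 * hf.sq_map_three) / 5

theorem sq_map_six (hf : SatisfiesQuadFE 3 f) :
    f 6 ^ 2 = (16 * (f 1 ^ 2) ^ 2 + 30 * f 2 ^ 2 - 28 * f 1 ^ 2) / 3 := by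
  have h₁ := hf 6 4 (by norm_num) (by norm_num)
  have h₂ := hf 3 5 (by norm_num) (by norm_num)
  norm_num [hf.map_four] at h₁ h₂
  linear_combination h₂ - h₁ + 3 * hf.sq_map_five + 10 * hf.sq_map_three

theorem relation_52 (hf : SatisfiesQuadFE 3 f) :
    (f 2 ^ 2 + 3 * f 1 ^ 2) ^ 2 + 3 * f 1 ^ 2 = f 2 ^ 2 + 48 * (f 1 ^ 2) ^ 2 := by
  have h₁ := hf 7 1 (by norm_num) one_pos
  have h₂ := hf 2 4 two_pos (by norm_num)
  norm_num [hf.map_four, hf.map_seven] at h₁ h₂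
  linear_combination h₂ - h₁

theorem sq_map_eight (hf : SatisfiesQuadFE 3 f) :
    f 8 ^ 2 = (f 2 ^ 2 + 3 * f 1 ^ 2) ^ 2 + 3 * f 3 ^ 2 - 3 * f 2 ^ 2 := by
  have h₁ := hf 8 2 (by norm_num) two_pos
  have h₂ := hf 7 3 (by norm_num) (by norm_num)
  norm_num [hf.map_seven] at h₁ h₂
  linear_combination h₂ - h₁

theorem relation_172 (hf : SatisfiesQuadFE 3 f) :
    (f 1 ^ 2 + 3 * f 2 ^ 2) ^ 2 + 3 * f 1 ^ 2 = f 8 ^ 2 + 3 * f 6 ^ 2 := by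
  have h₁ := hf 13 1 (by norm_num) one_pos
  have h₂ := hf 8 6 (by norm_num) (by norm_num)
  have h₁₃ := hf 1 2 one_pos two_pos
  norm_num at h₁ h₂ h₁₃
  rw [h₁₃] at h₁
  linear_combination h₂ - h₁

theorem sq_map_one_trichotomy (hf : SatisfiesQuadFE 3 f) :
    f 1 ^ 2 = 0 ∨ f 1 ^ 2 = 1 ∨ f 1 ^ 2 = 1 / 16 := by
  have h₅₂ := hf.relation_52
  have h₁₇₂ := hf.relation_172
  rw [hf.sq_map_eight, hf.sq_map_six, hf.sq_map_three] at h₁₇₂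
  have hb := hf.sq_map_two
  set a := f 1 ^ 2
  have key : a * (a - 1) * (16 * a - 1) = 0 := by
    linear_combination 5 / 6 * h₅₂ - 5 / 48 * h₁₇₂ - (5 * a + 55 / 24) * hb
  rcases mul_eq_zero.1 key with h | h
  · rcases mul_eq_zero.1 h with h | h
    · exact .inl h
    · exact .inr (.inl (sub_eq_zero.1 h))
  · exact .inr (.inr (by linear_combination h / 16))

theorem eq_and_sq_eq_of_sq_map_one_eq (hf : SatisfiesQuadFE 3 f) (hg : SatisfiesQuadFE 3 g)
    (h₁ : f 1 ^ 2 = g 1 ^ 2) :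
    f 4 = g 4 ∧ f 7 = g 7 ∧ ∀ n, 1 ≤ n → n ≤ 7 → f n ^ 2 = g n ^ 2 := by
  have h₂ : f 2 ^ 2 = g 2 ^ 2 := by rw [hf.sq_map_two, hg.sq_map_two, h₁]
  have h₃ : f 3 ^ 2 = g 3 ^ 2 := by rw [hf.sq_map_three, hg.sq_map_three, h₁, h₂]
  have h₄ : f 4 = g 4 := by rw [hf.map_four, hg.map_four, h₁]
  have h₅ : f 5 ^ 2 = g 5 ^ 2 := by rw [hf.sq_map_five, hg.sq_map_five, h₁, h₃]
  have h₆ : f 6 ^ 2 = g 6 ^ 2 := by rw [hf.sq_map_six, hg.sq_map_six, h₁, h₂]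
  have h₇ : f 7 = g 7 := by rw [hf.map_seven, hg.map_seven, h₁, h₂]
  refine ⟨h₄, h₇, fun n hn₁ hn₇ => ?_⟩
  interval_cases n <;> simp only [h₁, h₂, h₃, h₄, h₅, h₆, h₇]

end SatisfiesQuadFE

theorem eq_or_eq_neg_of_sq_eq_of_eq_four_seven {f g : ℕ → ℂ} (h₄ : f 4 = g 4) (h₇ : f 7 = g 7)
    (hsq : ∀ n, 1 ≤ n → n ≤ 7 → f n ^ 2 = g n ^ 2) :
    ∀ n : ℕ, 1 ≤ n → n ≤ 7 →
      ((n = 4 ∨ n = 7) → f n = g n) ∧ (¬ (n = 4 ∨ n = 7) → f n = g n ∨ f n = -g n) := by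
  refine fun n hn₁ hn₇ => ⟨?_, fun _ => eq_or_eq_neg_of_sq_eq_sq _ _ (hsq n hn₁ hn₇)⟩
  rintro (rfl | rfl)
  exacts [h₄, h₇]

theorem small_range_trichotomy_k3 (f : ℕ → ℂ)
    (hf : ∀ u v : ℕ, 0 < u → 0 < v →
      f (u ^ 2 + 3 * v ^ 2) = f u ^ 2 + 3 * f v ^ 2) :
    (∀ n : ℕ, 1 ≤ n → n ≤ 7 → f n = 0) ∨
    (∀ n : ℕ, 1 ≤ n → n ≤ 7 →
      ((n = 4 ∨ n = 7) → f n = (n : ℂ)) ∧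
      (¬ (n = 4 ∨ n = 7) → f n = (n : ℂ) ∨ f n = -(n : ℂ))) ∨
    (∀ n : ℕ, 1 ≤ n → n ≤ 7 →
      ((n = 4 ∨ n = 7) → f n = 1 / 4) ∧
      (¬ (n = 4 ∨ n = 7) → f n = 1 / 4 ∨ f n = -(1 / 4))) := by
  have hf : SatisfiesQuadFE 3 f := fun u v hu hv => by exact_mod_cast hf u v hu hv
  rcases hf.sq_map_one_trichotomy with h₁ | h₁ | h₁
  · obtain ⟨-, -, hsq⟩ := hf.eq_and_sq_eq_of_sq_map_one_eq
      (satisfiesQuadFE_const (c := 0) (by simp)) (by simp [h₁])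
    exact .inl fun n hn₁ hn₇ => pow_eq_zero_iff two_ne_zero |>.1 (by simpa using hsq n hn₁ hn₇)
  · obtain ⟨h₄, h₇, hsq⟩ := hf.eq_and_sq_eq_of_sq_map_one_eq (satisfiesQuadFE_natCast 3)
      (by simp [h₁])
    exact .inr (.inl (eq_or_eq_neg_of_sq_eq_of_eq_four_seven h₄ h₇ hsq))
  · obtain ⟨h₄, h₇, hsq⟩ := hf.eq_and_sq_eq_of_sq_map_one_eq
      (satisfiesQuadFE_const (c := 1 / 4) (by norm_num)) (by norm_num [h₁])
    exact .inr (.inr (eq_or_eq_neg_of_sq_eq_of_eq_four_seven h₄ h₇ hsq))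
end

section
/- Let f : N → C satisfy f(u² + 4v²) = f(u)² + 4·f(v)² for all positive integers u, v, and write a = f(1), b = f(2). Then f(3)² = (8b² − 5a²)/3, f(4)² = 5b² − 4a², f(5)² = 8b² − 7a², f(6)² = (35b² − 32a²)/3, f(7)² = 16b² − 15a², and f(8)² = 21b² − 20a². -/
/-!
Whenever an integer has two representations `u² + 4v² = x² + 4y²` by positive integers, the
functional equation forces `f(u)² + 4f(v)² = f(x)² + 4f(y)²`. The coincidences
`20 = 4² + 4·1² = 2² + 4·2²`, `65 = 1² + 4·4² = 7² + 4·2²`, `68 = 2² + 4·4² = 8² + 4·1²`,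
`40 = 2² + 4·3² = 6² + 4·1²`, `85 = 7² + 4·3² = 9² + 4·1²`, `145 = 1² + 4·6² = 9² + 4·4²`,
`104 = 2² + 4·5² = 10² + 4·1²` and `200 = 2² + 4·7² = 10² + 4·5²` give linear relations between
the squares `f(n)²`, which can be solved for `f(3)², …, f(8)²` in terms of `f(1)²` and `f(2)²`.
-/

def SquaresFunctionalEq {R : Type*} [CommSemiring R] (k : ℕ) (f : ℕ → R) : Prop :=
  ∀ u v : ℕ, 0 < u → 0 < v → f (u ^ 2 + k * v ^ 2) = f u ^ 2 + k * f v ^ 2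

theorem SquaresFunctionalEq.sq_add_mul_sq_eq {R : Type*} [CommSemiring R] {k : ℕ} {f : ℕ → R}
    (hf : SquaresFunctionalEq k f) (u v x y : ℕ)
    (hu : 0 < u := by norm_num) (hv : 0 < v := by norm_num)
    (hx : 0 < x := by norm_num) (hy : 0 < y := by norm_num)
    (h : u ^ 2 + k * v ^ 2 = x ^ 2 + k * y ^ 2 := by norm_num) :
    f u ^ 2 + k * f v ^ 2 = f x ^ 2 + k * f y ^ 2 := by
  rw [← hf u v hu hv, ← hf x y hx hy, h]

theorem squares_formulae_k4 (f : ℕ → ℂ)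
    (hf : ∀ u v : ℕ, 0 < u → 0 < v →
      f (u ^ 2 + 4 * v ^ 2) = f u ^ 2 + 4 * f v ^ 2)
    (a b : ℂ) (ha : a = f 1) (hb : b = f 2) :
    f 3 ^ 2 = (8 * b ^ 2 - 5 * a ^ 2) / 3 ∧
    f 4 ^ 2 = 5 * b ^ 2 - 4 * a ^ 2 ∧
    f 5 ^ 2 = 8 * b ^ 2 - 7 * a ^ 2 ∧
    f 6 ^ 2 = (35 * b ^ 2 - 32 * a ^ 2) / 3 ∧
    f 7 ^ 2 = 16 * b ^ 2 - 15 * a ^ 2 ∧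
    f 8 ^ 2 = 21 * b ^ 2 - 20 * a ^ 2 := by
  subst ha hb
  have hf4 : SquaresFunctionalEq 4 f := fun u v hu hv => by exact_mod_cast hf u v hu hv
  have e20 := hf4.sq_add_mul_sq_eq 4 1 2 2
  have e65 := hf4.sq_add_mul_sq_eq 1 4 7 2
  have e68 := hf4.sq_add_mul_sq_eq 2 4 8 1
  have e40 := hf4.sq_add_mul_sq_eq 2 3 6 1
  have e85 := hf4.sq_add_mul_sq_eq 7 3 9 1
  have e145 := hf4.sq_add_mul_sq_eq 1 6 9 4
  have e104 := hf4.sq_add_mul_sq_eq 2 5 10 1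
  have e200 := hf4.sq_add_mul_sq_eq 2 7 10 5
  have h4 : f 4 ^ 2 = 5 * f 2 ^ 2 - 4 * f 1 ^ 2 := by linear_combination e20
  have h7 : f 7 ^ 2 = 16 * f 2 ^ 2 - 15 * f 1 ^ 2 := by linear_combination 4 * h4 - e65
  have h8 : f 8 ^ 2 = 21 * f 2 ^ 2 - 20 * f 1 ^ 2 := by linear_combination 4 * h4 - e68
  have h6 : f 6 ^ 2 = (35 * f 2 ^ 2 - 32 * f 1 ^ 2) / 3 := by
    linear_combination (e145 - e85 + e40 + 4 * h4 + h7) / 3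
  have h3 : f 3 ^ 2 = (8 * f 2 ^ 2 - 5 * f 1 ^ 2) / 3 := by linear_combination (e40 + h6) / 4
  have h5 : f 5 ^ 2 = 8 * f 2 ^ 2 - 7 * f 1 ^ 2 := by linear_combination (e104 - e200 + 4 * h7) / 8
  exact ⟨h3, h4, h5, h6, h7, h8⟩
end

section
/- Let f : N → C satisfy f(u² + 4v²) = f(u)² + 4·f(v)² for all positive integers u, v. Then f(1) ∈ {0, 1, −1, 1/5, −1/5}. -/
/-!
Every integer with two representations `u² + 4v² = u'² + 4v'²` yields the relation
`f(u)² + 4 f(v)² = f(u')² + 4 f(v')²`. With `a = f 1`, the collisions at 20, 65, 104, 125, 185,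
200 and 205 express `f(n)²` for `n = 2, 3, 4, 7, 10, 11` as polynomials in `a`, so that
`f 8 = f(2)² + 4a²` and `f 17 = a² + 4 f(2)²` are polynomials in `a` as well. The collisions at
164, and at 85 and 325, give second expressions for `f(8)²` and `f(17)²`; comparing the two
equations so obtained leaves `60 a² (a² - 1) (25 a² - 1) = 0`.
-/

def PreservesSqAddMulSq {R : Type*} [Semiring R] (k : ℕ) (f : ℕ → R) : Prop :=
  ∀ u v : ℕ, 0 < u → 0 < v → f (u ^ 2 + k * v ^ 2) = f u ^ 2 + k * f v ^ 2

namespace PreservesSqAddMulSq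

theorem sq_add_mul_sq_eq_of_eq {R : Type*} [Semiring R] {k : ℕ} {f : ℕ → R}
    (hf : PreservesSqAddMulSq k f) (u v u' v' : ℕ)
    (h : u ^ 2 + k * v ^ 2 = u' ^ 2 + k * v' ^ 2)
    (hu : 0 < u := by norm_num) (hv : 0 < v := by norm_num)
    (hu' : 0 < u' := by norm_num) (hv' : 0 < v' := by norm_num) :
    f u ^ 2 + k * f v ^ 2 = f u' ^ 2 + k * f v' ^ 2 := by
  rw [← hf u v hu hv, ← hf u' v' hu' hv', h]

section CommRing

variable {R : Type*} [CommRing R] {f : ℕ → R}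

theorem apply_five (hf : PreservesSqAddMulSq 4 f) : f 5 = 5 * f 1 ^ 2 := by
  linear_combination hf 1 1 one_pos one_pos

theorem apply_eight (hf : PreservesSqAddMulSq 4 f) : f 8 = f 2 ^ 2 + 4 * f 1 ^ 2 := by
  linear_combination hf 2 1 two_pos one_pos

theorem apply_seventeen (hf : PreservesSqAddMulSq 4 f) : f 17 = f 1 ^ 2 + 4 * f 2 ^ 2 := by
  linear_combination hf 1 2 one_pos two_pos

theorem sq_apply_four (hf : PreservesSqAddMulSq 4 f) :
    f 4 ^ 2 = 5 * f 2 ^ 2 - 4 * f 1 ^ 2 := by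
  linear_combination hf.sq_add_mul_sq_eq_of_eq 4 1 2 2 (by norm_num)

theorem sq_apply_ten (hf : PreservesSqAddMulSq 4 f) :
    f 10 ^ 2 = f 2 ^ 2 + 100 * f 1 ^ 4 - 4 * f 1 ^ 2 := by
  linear_combination hf.sq_add_mul_sq_eq_of_eq 10 1 2 5 (by norm_num)
    + 4 * (f 5 + 5 * f 1 ^ 2) * hf.apply_five

theorem sq_apply_eleven (hf : PreservesSqAddMulSq 4 f) :
    f 11 ^ 2 = 125 * f 1 ^ 4 - 4 * f 1 ^ 2 := by
  linear_combination hf.sq_add_mul_sq_eq_of_eq 11 1 5 5 (by norm_num)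
    + 5 * (f 5 + 5 * f 1 ^ 2) * hf.apply_five

theorem four_mul_sq_apply_seven (hf : PreservesSqAddMulSq 4 f) :
    4 * f 7 ^ 2 = 200 * f 1 ^ 4 - 4 * f 1 ^ 2 := by
  linear_combination hf.sq_add_mul_sq_eq_of_eq 2 7 10 5 (by norm_num) + hf.sq_apply_ten
    + 4 * (f 5 + 5 * f 1 ^ 2) * hf.apply_five

theorem sq_apply_eight (hf : PreservesSqAddMulSq 4 f) :
    f 8 ^ 2 = 21 * f 2 ^ 2 - 20 * f 1 ^ 2 := by
  linear_combination hf.sq_add_mul_sq_eq_of_eq 8 5 10 4 (by norm_num) + hf.sq_apply_ten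
    + 4 * hf.sq_apply_four - 4 * (f 5 + 5 * f 1 ^ 2) * hf.apply_five

theorem sq_apply_seventeen_eq (hf : PreservesSqAddMulSq 4 f) :
    f 17 ^ 2 = 4 * f 7 ^ 2 + 12 * f 3 ^ 2 - 15 * f 1 ^ 2 := by
  linear_combination -hf.sq_add_mul_sq_eq_of_eq 1 9 17 3 (by norm_num)
    - 4 * hf.sq_add_mul_sq_eq_of_eq 7 3 9 1 (by norm_num)

end CommRing

section Field

variable {R : Type*} [Field R] [CharZero R] {f : ℕ → R}

theorem sq_apply_seven (hf : PreservesSqAddMulSq 4 f) : f 7 ^ 2 = 50 * f 1 ^ 4 - f 1 ^ 2 := by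
  linear_combination hf.four_mul_sq_apply_seven / 4

theorem eight_mul_sq_apply_two (hf : PreservesSqAddMulSq 4 f) :
    8 * f 2 ^ 2 = 25 * f 1 ^ 4 + 7 * f 1 ^ 2 := by
  linear_combination (-hf.sq_add_mul_sq_eq_of_eq 7 2 1 4 (by norm_num) - 4 * hf.sq_apply_four
    + hf.sq_apply_seven) / 2

theorem three_mul_sq_apply_three (hf : PreservesSqAddMulSq 4 f) :
    3 * f 3 ^ 2 = 25 * f 1 ^ 4 + 2 * f 1 ^ 2 := by
  linear_combination hf.sq_add_mul_sq_eq_of_eq 11 4 13 2 (by norm_num)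
    - hf.sq_add_mul_sq_eq_of_eq 3 7 13 3 (by norm_num) + 4 * hf.sq_apply_seven
    - 4 * hf.sq_apply_four - hf.sq_apply_eleven - 2 * hf.eight_mul_sq_apply_two

theorem sq_apply_seventeen (hf : PreservesSqAddMulSq 4 f) :
    f 17 ^ 2 = 300 * f 1 ^ 4 - 11 * f 1 ^ 2 := by
  linear_combination hf.sq_apply_seventeen_eq + hf.four_mul_sq_apply_seven
    + 4 * hf.three_mul_sq_apply_three

theorem apply_one_sq_mul_sq_sub_one_mul_eq_zero (hf : PreservesSqAddMulSq 4 f) :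
    f 1 ^ 2 * (f 1 ^ 2 - 1) * (25 * f 1 ^ 2 - 1) = 0 := by
  have h8 : (25 * f 1 ^ 4 + 39 * f 1 ^ 2) ^ 2 = 4200 * f 1 ^ 4 - 104 * f 1 ^ 2 := by
    have : 8 * f 8 = 25 * f 1 ^ 4 + 39 * f 1 ^ 2 := by
      linear_combination 8 * hf.apply_eight + hf.eight_mul_sq_apply_two
    rw [← this]
    linear_combination 64 * hf.sq_apply_eight + 168 * hf.eight_mul_sq_apply_two
  have h17 : (25 * f 1 ^ 4 + 9 * f 1 ^ 2) ^ 2 = 1200 * f 1 ^ 4 - 44 * f 1 ^ 2 := by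
    have : 2 * f 17 = 25 * f 1 ^ 4 + 9 * f 1 ^ 2 := by
      linear_combination 2 * hf.apply_seventeen + hf.eight_mul_sq_apply_two
    rw [← this]
    linear_combination 4 * hf.sq_apply_seventeen
  linear_combination (h8 - h17) / 60

end Field

end PreservesSqAddMulSq

theorem eq_zero_or_eq_one_or_eq_neg_one_or_eq_fifth_or_eq_neg_fifth {K : Type*} [Field K] [CharZero K] {a : K}
    (h : a ^ 2 * (a ^ 2 - 1) * (25 * a ^ 2 - 1) = 0) :
    a = 0 ∨ a = 1 ∨ a = -1 ∨ a = 1 / 5 ∨ a = -(1 / 5) := by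
  rcases mul_eq_zero.1 h with h | h25
  · rcases mul_eq_zero.1 h with h0 | h1
    · exact Or.inl ((pow_eq_zero_iff two_ne_zero).1 h0)
    · have : a ^ 2 = 1 ^ 2 := by linear_combination h1
      rcases sq_eq_sq_iff_eq_or_eq_neg.1 this with h | h
      · exact Or.inr (Or.inl h)
      · exact Or.inr (Or.inr (Or.inl h))
  · have : (5 * a) ^ 2 = 1 ^ 2 := by linear_combination h25
    rcases sq_eq_sq_iff_eq_or_eq_neg.1 this with h | h
    · exact Or.inr (Or.inr (Or.inr (Or.inl (by linear_combination h / 5))))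
    · exact Or.inr (Or.inr (Or.inr (Or.inr (by linear_combination h / 5))))

theorem value_f1_k4 (f : ℕ → ℂ)
    (hf : ∀ u v : ℕ, 0 < u → 0 < v →
      f (u ^ 2 + 4 * v ^ 2) = f u ^ 2 + 4 * f v ^ 2) :
    f 1 = 0 ∨ f 1 = 1 ∨ f 1 = -1 ∨ f 1 = 1 / 5 ∨ f 1 = -(1 / 5) := by
  have hf' : PreservesSqAddMulSq 4 f := fun u v hu hv => by exact_mod_cast hf u v hu hv
  exact eq_zero_or_eq_one_or_eq_neg_one_or_eq_fifth_or_eq_neg_fifth hf'.apply_one_sq_mul_sq_sub_one_mul_eq_zero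
end

section
/- Let f : N → C satisfy f(u² + 4v²) = f(u)² + 4·f(v)² for all positive integers u, v. Then one of the following holds: (1) f(n) = 0 for every positive integer n; (2) for every positive integer n, f(n) = n whenever there exist positive integers u, v with n = u² + 4v², and f(n) = n or f(n) = −n otherwise; (3) for every positive integer n, f(n) = 1/5 whenever there exist positive integers u, v with n = u² + 4v², and f(n) = 1/5 or f(n) = −1/5 otherwise. -/
/-!
Put `g n = f n ^ 2`. The equation says that `g u + 4 g v` depends only on `u² + 4v²`, and the
functions with this property are exactly `α + β n²`: the identities
`(2k)² + 4(k-1)² = (2k-2)² + 4k²`, `(4t+9)² + 4(t+1)² = (4t+7)² + 4(t+3)²` and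
`(4t+7)² + 4(3t+2)² = (4t+1)² + 4(3t+4)²` determine `g n` from smaller arguments outside
`n ∈ {1, 2, 3, 5}`, and seven collisions `u² + 4v² = x² + 4y² ≤ 200` determine `g 3` and `g 5`
from `g 1` and `g 2`.
Then `f (u² + 4v²) = 5α + β (u² + 4v²)`, and squaring this at `m = 5, 8, 13` gives
`(25α² - α) + 10αβ m + (β² - β) m² = 0` at three points, so `(α, β)` is `(0, 0)`, `(0, 1)` or
`(1/25, 0)`.
-/

def RespectsCollisions {K : Type*} [Semiring K] (g : ℕ → K) : Prop :=
  ∀ u v x y : ℕ, 0 < u → 0 < v → 0 < x → 0 < y →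
    u ^ 2 + 4 * v ^ 2 = x ^ 2 + 4 * y ^ 2 → g u + 4 * g v = g x + 4 * g y

namespace RespectsCollisions

section CommRing

variable {K : Type*} [CommRing K] {g h e : ℕ → K}

theorem sub (hg : RespectsCollisions g) (hh : RespectsCollisions h) :
    RespectsCollisions (g - h) := fun u v x y hu hv hx hy huv => by
  simp only [Pi.sub_apply]
  linear_combination hg u v x y hu hv hx hy huv - hh u v x y hu hv hx hy huv

theorem const_add_mul_sq (α β : K) : RespectsCollisions fun n => α + β * (n : K) ^ 2 :=
  fun u v x y _ _ _ _ huv => by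
    have := congrArg (Nat.cast : ℕ → K) huv
    push_cast at this
    linear_combination β * this

theorem eq_zero_of_apply_one_two_three_five (he : RespectsCollisions e)
    (h1 : e 1 = 0) (h2 : e 2 = 0) (h3 : e 3 = 0) (h5 : e 5 = 0) :
    ∀ n, 0 < n → e n = 0 := by
  intro n
  induction n using Nat.strong_induction_on with
  | _ n ih =>
  intro hn
  have reduce : ∀ b c d, (0 < b ∧ b < n ∧ 0 < c ∧ c < n ∧ 0 < d ∧ d < n) →
      n ^ 2 + 4 * b ^ 2 = c ^ 2 + 4 * d ^ 2 → e n = 0 := by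
    rintro b c d ⟨hb, hbn, hc, hcn, hd, hdn⟩ hcol
    have := he n b c d hn hb hc hd hcol
    rw [ih b hbn hb, ih c hcn hc, ih d hdn hd] at this
    simpa using this
  rcases (by omega : n = 1 ∨ n = 2 ∨ n = 3 ∨ n = 5 ∨ n % 2 = 0 ∧ 4 ≤ n ∨
      n % 4 = 1 ∧ 9 ≤ n ∨ n % 4 = 3 ∧ 7 ≤ n) with
    rfl | rfl | rfl | rfl | hn' | hn' | hn'
  · exact h1
  · exact h2
  · exact h3
  · exact h5
  · obtain ⟨k, rfl⟩ : ∃ k, n = 2 * k + 4 := ⟨n / 2 - 2, by omega⟩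
    exact reduce (k + 1) (2 * k + 2) (k + 2) (by omega) (by ring)
  · obtain ⟨t, rfl⟩ : ∃ t, n = 4 * t + 9 := ⟨n / 4 - 2, by omega⟩
    exact reduce (t + 1) (4 * t + 7) (t + 3) (by omega) (by ring)
  · obtain ⟨t, rfl⟩ : ∃ t, n = 4 * t + 7 := ⟨n / 4 - 1, by omega⟩
    exact reduce (3 * t + 2) (4 * t + 1) (3 * t + 4) (by omega) (by ring)

end CommRing

section Field

variable {K : Type*} [Field K] [CharZero K] {g e : ℕ → K}

theorem apply_three_eq_zero_and_apply_five_eq_zero (he : RespectsCollisions e)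
    (h1 : e 1 = 0) (h2 : e 2 = 0) : e 3 = 0 ∧ e 5 = 0 := by
  have col (u v x y : ℕ) (hu : 0 < u := by norm_num) (hv : 0 < v := by norm_num)
      (hx : 0 < x := by norm_num) (hy : 0 < y := by norm_num)
      (huv : u ^ 2 + 4 * v ^ 2 = x ^ 2 + 4 * y ^ 2 := by norm_num) :
      e u + 4 * e v = e x + 4 * e y :=
    he u v x y hu hv hx hy huv
  have c65 := col 1 4 7 2
  have c145 := col 1 6 9 4
  have c20 := col 2 2 4 1
  have c40 := col 2 3 6 1
  have c104 := col 2 5 10 1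
  have c200 := col 2 7 10 5
  have c85 := col 7 3 9 1
  -- `e 4 = e 7 = 0`; then `4 e 3 = e 9 = 4 e 6 = 16 e 3` and `4 e 5 = e 10 = -4 e 5`
  constructor
  · linear_combination (-1 / 12 : K) * c65 + (1 / 12 : K) * c145 - (2 / 3 : K) * c20
      + (1 / 3 : K) * c40 - (1 / 12 : K) * c85 - (5 / 3 : K) * h1 + (8 / 3 : K) * h2
  · linear_combination (-1 / 2 : K) * c65 - 2 * c20 + (1 / 8 : K) * c104 - (1 / 8 : K) * c200
      - 7 * h1 + 8 * h2

theorem exists_eq_const_add_mul_sq (hg : RespectsCollisions g) :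
    ∃ α β : K, ∀ n, 0 < n → g n = α + β * (n : K) ^ 2 := by
  set β := (g 2 - g 1) / 3
  set α := g 1 - β
  set q : ℕ → K := fun n => α + β * (n : K) ^ 2
  have hd := hg.sub (const_add_mul_sq α β)
  have h1 : (g - q) 1 = 0 := by simp [q, α]
  have h2 : (g - q) 2 = 0 := by simp only [Pi.sub_apply, Nat.cast_ofNat, q, α, β]; ring
  obtain ⟨h3, h5⟩ := hd.apply_three_eq_zero_and_apply_five_eq_zero h1 h2
  exact ⟨α, β, fun n hn => sub_eq_zero.1 (hd.eq_zero_of_apply_one_two_three_five h1 h2 h3 h5 n hn)⟩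

end Field

end RespectsCollisions

theorem const_add_mul_sq_cases {K : Type*} [Field K] [CharZero K] {α β : K}
    (h : ∀ m ∈ ({5, 8, 13} : Set ℕ), (5 * α + β * m) ^ 2 = α + β * (m : K) ^ 2) :
    α = 0 ∧ β = 0 ∨ α = 0 ∧ β = 1 ∨ α = 1 / 25 ∧ β = 0 := by
  have h5 := h 5 (by simp)
  have h8 := h 8 (by simp)
  have h13 := h 13 (by simp)
  push_cast at h5 h8 h13
  -- Lagrange interpolation of `(25α² - α) + 10αβ m + (β² - β) m²` at `m = 5, 8, 13`
  have hβ : β * (β - 1) = 0 := by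
    linear_combination (1 / 24 : K) * h5 - (1 / 15 : K) * h8 + (1 / 40 : K) * h13
  have hαβ : α * β = 0 := by
    linear_combination (-21 / 240 : K) * h5 + (18 / 150 : K) * h8 - (13 / 400 : K) * h13
  have hα : α * (25 * α - 1) = 0 := by
    linear_combination (13 / 3 : K) * h5 - (13 / 3 : K) * h8 + h13
  rcases mul_eq_zero.1 hβ with hβ0 | hβ1
  · rcases mul_eq_zero.1 hα with hα0 | hα1
    · exact Or.inl ⟨hα0, hβ0⟩
    · exact Or.inr (Or.inr ⟨by linear_combination hα1 / 25, hβ0⟩)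
  · have hβ1 : β = 1 := by linear_combination hβ1
    exact Or.inr (Or.inl ⟨by simpa [hβ1] using hαβ, hβ1⟩)

theorem conjecture_k4 (f : ℕ → ℂ)
    (hf : ∀ u v : ℕ, 0 < u → 0 < v →
      f (u ^ 2 + 4 * v ^ 2) = f u ^ 2 + 4 * f v ^ 2) :
    (∀ n : ℕ, 1 ≤ n → f n = 0) ∨
    (∀ n : ℕ, 1 ≤ n →
      ((∃ u v : ℕ, 0 < u ∧ 0 < v ∧ n = u ^ 2 + 4 * v ^ 2) → f n = (n : ℂ)) ∧
      (¬ (∃ u v : ℕ, 0 < u ∧ 0 < v ∧ n = u ^ 2 + 4 * v ^ 2) → f n = (n : ℂ) ∨ f n = -(n : ℂ))) ∨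
    (∀ n : ℕ, 1 ≤ n →
      ((∃ u v : ℕ, 0 < u ∧ 0 < v ∧ n = u ^ 2 + 4 * v ^ 2) → f n = 1 / 5) ∧
      (¬ (∃ u v : ℕ, 0 < u ∧ 0 < v ∧ n = u ^ 2 + 4 * v ^ 2) → f n = 1 / 5 ∨ f n = -(1 / 5))) := by
  have hsq : RespectsCollisions fun n => f n ^ 2 := fun u v x y hu hv hx hy huv => by
    simp only [← hf u v hu hv, ← hf x y hx hy, huv]
  obtain ⟨α, β, hg⟩ := hsq.exists_eq_const_add_mul_sq
  have hrep : ∀ n : ℕ, (∃ u v : ℕ, 0 < u ∧ 0 < v ∧ n = u ^ 2 + 4 * v ^ 2) →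
      f n = 5 * α + β * n := by
    rintro n ⟨u, v, hu, hv, rfl⟩
    rw [hf u v hu hv, hg u hu, hg v hv]
    push_cast
    ring
  have hsquare : ∀ n : ℕ, (∃ u v : ℕ, 0 < u ∧ 0 < v ∧ n = u ^ 2 + 4 * v ^ 2) →
      (5 * α + β * n) ^ 2 = α + β * (n : ℂ) ^ 2 := by
    intro n hn
    have hn0 : 0 < n := by
      obtain ⟨u, v, hu, -, rfl⟩ := hn
      positivity
    rw [← hrep n hn, hg n hn0]
  have hcases := const_add_mul_sq_cases (α := α) (β := β) <| by
    rintro m (rfl | rfl | rfl)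
    exacts [hsquare 5 ⟨1, 1, by norm_num⟩, hsquare 8 ⟨2, 1, by norm_num⟩,
      hsquare 13 ⟨3, 1, by norm_num⟩]
  rcases hcases with ⟨rfl, rfl⟩ | ⟨rfl, rfl⟩ | ⟨rfl, rfl⟩
  · exact Or.inl fun n hn => by simpa using hg n hn
  · refine Or.inr (Or.inl fun n hn => ⟨fun h => by simpa using hrep n h, fun _ => ?_⟩)
    exact sq_eq_sq_iff_eq_or_eq_neg.1 (by simpa using hg n hn)
  · refine Or.inr (Or.inr fun n hn => ⟨fun h => by norm_num [hrep n h], fun _ => ?_⟩)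
    exact sq_eq_sq_iff_eq_or_eq_neg.1 (by norm_num [hg n hn])
end

section
/- Let f : N → C satisfy f(u² + 5v²) = f(u)² + 5·f(v)² for all positive integers u, v, and write a = f(1), b = f(2). Then f(3)² = (8b² − 5a²)/3, f(4)² = 5b² − 4a², f(5)² = 8b² − 7a², f(6)² = (35b² − 32a²)/3, f(7)² = 16b² − 15a², f(8)² = 21b² − 20a², f(9)² = (80b² − 77a²)/3, and f(10)² = 33b² − 32a². -/
/-!
Whenever a number has two representations `u² + 5v² = x² + 5y²` with positive entries, the
functional equation gives `f(u)² + 5 f(v)² = f(x)² + 5 f(y)²`. The coincidences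
`21 = 4² + 5·1² = 1² + 5·2²`, `84 = 8² + 5·2² = 2² + 5·4²`,
`69 = 8² + 5·1² = 7² + 5·2²`, `54 = 7² + 5·1² = 3² + 5·3²`,
`81 = 6² + 5·3² = 1² + 5·4²`, `129 = 7² + 5·4² = 2² + 5·5²`,
`126 = 9² + 5·3² = 1² + 5·5²` and `105 = 10² + 5·1² = 5² + 5·4²` then determine
`f(4)², f(8)², f(7)², f(3)², f(6)², f(5)², f(9)², f(10)²` in turn as linear combinations of
`f(1)²` and `f(2)²`.
-/

lemma sq_add_mul_sq_eq_of_eq {R : Type*} [CommSemiring R] {k : ℕ} {c : R} {f : ℕ → R}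
    (hf : ∀ u v : ℕ, 0 < u → 0 < v → f (u ^ 2 + k * v ^ 2) = f u ^ 2 + c * f v ^ 2)
    (u v x y : ℕ) (h : u ^ 2 + k * v ^ 2 = x ^ 2 + k * y ^ 2 := by norm_num)
    (hu : 0 < u := by norm_num) (hv : 0 < v := by norm_num)
    (hx : 0 < x := by norm_num) (hy : 0 < y := by norm_num) :
    f u ^ 2 + c * f v ^ 2 = f x ^ 2 + c * f y ^ 2 := by
  rw [← hf u v hu hv, ← hf x y hx hy, h]

theorem squares_formulae_k5 (f : ℕ → ℂ)
    (hf : ∀ u v : ℕ, 0 < u → 0 < v →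
      f (u ^ 2 + 5 * v ^ 2) = f u ^ 2 + 5 * f v ^ 2)
    (a b : ℂ) (ha : a = f 1) (hb : b = f 2) :
    f 3 ^ 2 = (8 * b ^ 2 - 5 * a ^ 2) / 3 ∧
    f 4 ^ 2 = 5 * b ^ 2 - 4 * a ^ 2 ∧
    f 5 ^ 2 = 8 * b ^ 2 - 7 * a ^ 2 ∧
    f 6 ^ 2 = (35 * b ^ 2 - 32 * a ^ 2) / 3 ∧
    f 7 ^ 2 = 16 * b ^ 2 - 15 * a ^ 2 ∧
    f 8 ^ 2 = 21 * b ^ 2 - 20 * a ^ 2 ∧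
    f 9 ^ 2 = (80 * b ^ 2 - 77 * a ^ 2) / 3 ∧
    f 10 ^ 2 = 33 * b ^ 2 - 32 * a ^ 2 := by
  subst ha hb
  have e4 : f 4 ^ 2 = 5 * f 2 ^ 2 - 4 * f 1 ^ 2 := by
    linear_combination sq_add_mul_sq_eq_of_eq hf 4 1 1 2
  have e8 : f 8 ^ 2 = 21 * f 2 ^ 2 - 20 * f 1 ^ 2 := by
    linear_combination sq_add_mul_sq_eq_of_eq hf 8 2 2 4 + 5 * e4
  have e7 : f 7 ^ 2 = 16 * f 2 ^ 2 - 15 * f 1 ^ 2 := by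
    linear_combination sq_add_mul_sq_eq_of_eq hf 7 2 8 1 + e8
  have e3 : f 3 ^ 2 = (8 * f 2 ^ 2 - 5 * f 1 ^ 2) / 3 := by
    linear_combination (sq_add_mul_sq_eq_of_eq hf 3 3 7 1 + e7) / 6
  have e6 : f 6 ^ 2 = (35 * f 2 ^ 2 - 32 * f 1 ^ 2) / 3 := by
    linear_combination sq_add_mul_sq_eq_of_eq hf 6 3 1 4 + 5 * e4 - 5 * e3
  have e5 : f 5 ^ 2 = 8 * f 2 ^ 2 - 7 * f 1 ^ 2 := by
    linear_combination (sq_add_mul_sq_eq_of_eq hf 2 5 7 4 + e7 + 5 * e4) / 5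
  have e9 : f 9 ^ 2 = (80 * f 2 ^ 2 - 77 * f 1 ^ 2) / 3 := by
    linear_combination sq_add_mul_sq_eq_of_eq hf 9 3 1 5 + 5 * e5 - 5 * e3
  have e10 : f 10 ^ 2 = 33 * f 2 ^ 2 - 32 * f 1 ^ 2 := by
    linear_combination sq_add_mul_sq_eq_of_eq hf 10 1 5 4 + e5 + 5 * e4
  exact ⟨e3, e4, e5, e6, e7, e8, e9, e10⟩
end

section
/- Let f : N → C satisfy f(u² + 5v²) = f(u)² + 5·f(v)² for all positive integers u, v. Then f(1) ∈ {0, 1, −1, 1/6, −1/6}. -/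
/-!
Whenever `n = u² + 5v² = x² + 5y²` has two representations, the equation gives
`f(u)² + 5 f(v)² = f(x)² + 5 f(y)²`. The coincidences at 21, 54, 69, 84, 126, 189, 324 and 686
express `f(n)²` for small `n` through `a = f(1)` and `b = f(2)` and end in three polynomial
relations between `a` and `b`; eliminating `b` leaves `a²(a² - 1)(36a² - 1) = 0`.
-/

def SolvesSqAddMulSq {R : Type*} [Semiring R] (k : ℕ) (f : ℕ → R) : Prop :=
  ∀ u v : ℕ, 0 < u → 0 < v → f (u ^ 2 + k * v ^ 2) = f u ^ 2 + k * f v ^ 2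

namespace SolvesSqAddMulSq

theorem sq_add_mul_sq_eq {R : Type*} [Semiring R] {k : ℕ} {f : ℕ → R}
    (hf : SolvesSqAddMulSq k f) (u v x y : ℕ)
    (h : u ^ 2 + k * v ^ 2 = x ^ 2 + k * y ^ 2 := by norm_num)
    (hu : 0 < u := by norm_num) (hv : 0 < v := by norm_num)
    (hx : 0 < x := by norm_num) (hy : 0 < y := by norm_num) :
    f u ^ 2 + k * f v ^ 2 = f x ^ 2 + k * f y ^ 2 := by
  rw [← hf u v hu hv, ← hf x y hx hy, h]

section CommRing

variable {R : Type*} [CommRing R] {f : ℕ → R} (hf : SolvesSqAddMulSq 5 f)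
include hf

theorem apply_six : f 6 = 6 * f 1 ^ 2 := by
  linear_combination hf 1 1 one_pos one_pos

theorem apply_nine : f 9 = f 2 ^ 2 + 5 * f 1 ^ 2 := by
  linear_combination hf 2 1 two_pos one_pos

theorem apply_twentyOne : f 21 = f 1 ^ 2 + 5 * f 2 ^ 2 := by
  linear_combination hf 1 2 one_pos two_pos

theorem sq_apply_four : f 4 ^ 2 = 5 * f 2 ^ 2 - 4 * f 1 ^ 2 := by
  linear_combination hf.sq_add_mul_sq_eq 4 1 1 2

theorem sq_apply_eight : f 8 ^ 2 = 21 * f 2 ^ 2 - 20 * f 1 ^ 2 := by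
  linear_combination hf.sq_add_mul_sq_eq 8 2 2 4 + 5 * hf.sq_apply_four

theorem sq_apply_seven : f 7 ^ 2 = 16 * f 2 ^ 2 - 15 * f 1 ^ 2 := by
  linear_combination hf.sq_add_mul_sq_eq 7 2 8 1 + hf.sq_apply_eight

end CommRing

section Field

variable {K : Type*} [Field K] [CharZero K] {f : ℕ → K} (hf : SolvesSqAddMulSq 5 f)
include hf

theorem sq_apply_three : 3 * f 3 ^ 2 = 8 * f 2 ^ 2 - 5 * f 1 ^ 2 := by
  linear_combination (1 / 2 : K) * (hf.sq_add_mul_sq_eq 3 3 7 1 + hf.sq_apply_seven)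

theorem sq_apply_five :
    15 * f 5 ^ 2 = 3 * (f 2 ^ 2 + 5 * f 1 ^ 2) ^ 2 + 40 * f 2 ^ 2 - 28 * f 1 ^ 2 := by
  linear_combination 3 * hf.sq_add_mul_sq_eq 1 5 9 3 + 3 * congrArg (· ^ 2) hf.apply_nine
    + 5 * hf.sq_apply_three

theorem sq_apply_eleven :
    3 * f 11 ^ 2 = 3 * (f 2 ^ 2 + 5 * f 1 ^ 2) ^ 2 + 40 * f 2 ^ 2 - 40 * f 1 ^ 2 := by
  linear_combination 3 * hf.sq_add_mul_sq_eq 11 1 9 3 + 3 * congrArg (· ^ 2) hf.apply_nine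
    + 5 * hf.sq_apply_three

theorem sq_apply_twelve : 3 * f 12 ^ 2 = 540 * f 1 ^ 4 - 32 * f 2 ^ 2 + 20 * f 1 ^ 2 := by
  linear_combination 3 * hf.sq_add_mul_sq_eq 12 3 3 6 + 15 * congrArg (· ^ 2) hf.apply_six
    - 4 * hf.sq_apply_three

theorem sq_apply_two : 35 * f 2 ^ 2 = 108 * f 1 ^ 4 + 32 * f 1 ^ 2 := by
  linear_combination (3 / 10 : K) * hf.sq_add_mul_sq_eq 2 8 12 6 - (3 / 2 : K) * hf.sq_apply_eight
    + (1 / 10 : K) * hf.sq_apply_twelve + (3 / 2 : K) * congrArg (· ^ 2) hf.apply_six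

theorem apply_one_sq_mul_sq_sub_one_mul_eq_zero :
    f 1 ^ 2 * (f 1 ^ 2 - 1) * (36 * f 1 ^ 2 - 1) = 0 := by
  have h189 : 3 * (f 2 ^ 2 + 5 * f 1 ^ 2) ^ 2 = 540 * f 1 ^ 4 - 95 * f 2 ^ 2 + 83 * f 1 ^ 2 := by
    linear_combination 3 * hf.sq_add_mul_sq_eq 8 5 3 6 + 15 * congrArg (· ^ 2) hf.apply_six
      + hf.sq_apply_three - 3 * hf.sq_apply_eight - hf.sq_apply_five
  have h686 : 57 * f 2 ^ 4 =
      150 * f 1 ^ 2 * f 2 ^ 2 + 447 * f 1 ^ 4 - 40 * f 2 ^ 2 + 25 * f 1 ^ 2 := by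
    linear_combination 3 * hf.sq_add_mul_sq_eq 21 7 9 11 + 3 * congrArg (· ^ 2) hf.apply_nine
      - 3 * congrArg (· ^ 2) hf.apply_twentyOne + 5 * hf.sq_apply_eleven - 15 * hf.sq_apply_seven
  linear_combination (-7 / 432 : K) * h686 + (133 / 432 : K) * h189
    + (-353 / 432 - f 1 ^ 2 / 3 : K) * hf.sq_apply_two

end Field

end SolvesSqAddMulSq

theorem value_f1_k5 (f : ℕ → ℂ)
    (hf : ∀ u v : ℕ, 0 < u → 0 < v →
      f (u ^ 2 + 5 * v ^ 2) = f u ^ 2 + 5 * f v ^ 2) :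
    f 1 = 0 ∨ f 1 = 1 ∨ f 1 = -1 ∨ f 1 = 1 / 6 ∨ f 1 = -(1 / 6) := by
  have hsol : SolvesSqAddMulSq 5 f := fun u v hu hv => by exact_mod_cast hf u v hu hv
  have hroots : f 1 * f 1 * (f 1 - 1) * (f 1 + 1) * (f 1 - 1 / 6) * (f 1 + 1 / 6) = 0 := by
    linear_combination hsol.apply_one_sq_mul_sq_sub_one_mul_eq_zero / 36
  simp only [mul_eq_zero, sub_eq_zero, add_eq_zero_iff_eq_neg, or_self] at hroots
  tauto
end
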